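/- Let X be a finitely supported subset of an invariant set under finitary permutations of A. The map sending a finitely supported subset Y ⊆ X to its characteristic function χ_Y : X → {0,1} (where {0,1} carries the trivial action) is a bijection from ℘_fs(X) onto the set of finitely supported functions from X to {0,1}, and this bijection is supported by supp(X). -/

import Mathlib

open Pointwise

/-- The group of finitary permutations of the set `A` of atoms: bijections of `A`
whose set of non-fixed points is finite. -/
def FinPerm (A : Type*) : Subgroup (Equiv.Perm A) where
  carrier := {π : Equiv.Perm A | {a : A | π a ≠ a}.Finite}
  one_mem' := by simp
  mul_mem' := by
    intro π σ hπ hσ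
    refine Set.Finite.subset (Set.Finite.union hπ hσ) ?_
    intro a ha
    simp only [Set.mem_setOf_eq, Set.mem_union] at *
    by_contra h
    push_neg at h
    obtain ⟨h1, h2⟩ := h
    exact ha (by rw [Equiv.Perm.mul_apply, h2, h1])
  inv_mem' := by
    intro π hπ
    refine Set.Finite.subset hπ ?_
    intro a ha
    simp only [Set.mem_setOf_eq] at *
    intro h
    exact ha (π.injective (by simp [h]))

/-- An element `x` is finitely supported if some finite set of atoms supports it. -/
def FinSupp (A : Type*) {X : Type*} [SMul (FinPerm A) X] (x : X) : Prop :=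
  ∃ S : Finset A, MulAction.Supports (FinPerm A) (S : Set A) x

/-- The least support of an element: the intersection of all finite sets of atoms
supporting it. -/
def supp (A : Type*) {X : Type*} [SMul (FinPerm A) X] (x : X) : Set A :=
  ⋂₀ {S : Set A | S.Finite ∧ MulAction.Supports (FinPerm A) S x}

/-- A set `S` of atoms supports a function `f` if `f (π • x) = π • f x` for every
finitary permutation `π` fixing `S` pointwise. -/
def SuppFun (A : Type*) {X Y : Type*} [SMul (FinPerm A) X] [SMul (FinPerm A) Y]
    (S : Set A) (f : X → Y) : Prop :=
  ∀ π : FinPerm A, (∀ a ∈ S, π • a = a) → ∀ x, f (π • x) = π • f x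

/-- A set `S` of atoms supports a function `f` between the subsets `X` and `Y` if, for
every finitary permutation `π` fixing `S` pointwise and every `x ∈ X`, we have
`π • x ∈ X`, `π • f x ∈ Y` and `f (π • x) = π • f x`. -/
def SuppFunOn (A : Type*) {U V : Type*} [SMul (FinPerm A) U] [SMul (FinPerm A) V]
    (S : Set A) (X : Set U) (Y : Set V) (f : U → V) : Prop :=
  ∀ π : FinPerm A, (∀ a ∈ S, π • a = a) →
    ∀ x ∈ X, π • x ∈ X ∧ π • f x ∈ Y ∧ f (π • x) = π • f x

/-- `℘_fs(X)`: the finitely supported subsets of the set `X`. -/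
def Pfs (A : Type*) {U : Type*} [SMul (FinPerm A) U] (X : Set U) : Set (Set U) :=
  {Z : Set U | Z ⊆ X ∧ FinSupp A Z}


open Classical in
/-- The characteristic function of `Y`, valued in `Bool` (playing the role of `{0,1}`,
with `true` for `1` and `false` for `0`, carrying the trivial action). -/
noncomputable def chi {U : Type*} (Y : Set U) : U → Bool :=
  fun x => if x ∈ Y then true else false

/-- The finitely supported functions from the subset `X` to `{0,1}` (with the trivial
action on `{0,1}`), represented as boolean functions that vanish off `X`: a finite set
`S` of atoms supports such a function `f` when, for every finitary permutation `π`
fixing `S` pointwise and every `x ∈ X`, `π • x ∈ X` and `f (π • x) = f x`. -/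
def FsBoolFun (A : Type*) {U : Type*} [SMul (FinPerm A) U] (X : Set U) :
    Set (U → Bool) :=
  {f : U → Bool | (∀ x, x ∉ X → f x = false) ∧
    ∃ S : Finset A, ∀ π : FinPerm A, (∀ a ∈ (S : Set A), π • a = a) →
      ∀ x ∈ X, π • x ∈ X ∧ f (π • x) = f x}

/-
Apart from the support claim, this is the correspondence between subsets and Boolean functions:
`χ` is injective, `f ↦ f⁻¹(true)` inverts it, and `χ_{π • Y} = χ_Y ∘ (π⁻¹ • ·)`. The support
claim needs `supp(X)` to support `X`, which holds because finite supports are closed under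
intersection: an atom `a ∈ T \ S` can be dropped from a support `T` when `S` is a support too,
since for `π` fixing `T \ {a}` and an atom `d` fresh for `π`, `S` and `T`, the conjugate
`(a d) π (a d)` fixes `T` while `(a d)` fixes `S`. So an inclusion-minimal finite support lies in
every finite support, hence in `supp(X)`.
-/

open MulAction

section Supports

variable {G α β : Type*} [Group G] [MulAction G α] [MulAction G β] {s : Set α}

lemma MulAction.Supports.smul_of_group {b : β} (h : Supports G s b) (g : G) :
    Supports G (g • s) (g • b) := by
  intro σ hσ
  have hconj : (g⁻¹ * σ * g) • b = b := h _ fun _ ha => by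
    rw [mul_smul, mul_smul, hσ (Set.smul_mem_smul_set ha), inv_smul_smul]
  rw [mul_smul, mul_smul, inv_smul_eq_iff] at hconj
  exact hconj

lemma MulAction.Supports.smul_mem_iff {t : Set β} (h : Supports G s t) {g : G}
    (hg : ∀ ⦃a⦄, a ∈ s → g • a = a) {x : β} : g • x ∈ t ↔ x ∈ t := by
  conv_lhs => rw [← h g hg]
  exact Set.smul_mem_smul_set_iff

lemma MulAction.supports_of_smul_subset {t : Set β}
    (h : ∀ g : G, (∀ ⦃a⦄, a ∈ s → g • a = a) → g • t ⊆ t) : Supports G s t := by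
  intro g hg
  have hg' : ∀ ⦃a⦄, a ∈ s → g⁻¹ • a = a := fun _ ha => inv_smul_eq_iff.mpr (hg ha).symm
  refine (h g hg).antisymm fun x hx => ?_
  exact ⟨g⁻¹ • x, h g⁻¹ hg' (Set.smul_mem_smul_set hx), smul_inv_smul g x⟩

end Supports

section Atoms

variable {A X : Type*}

lemma swap_mem_finPerm [DecidableEq A] (a b : A) : Equiv.swap a b ∈ FinPerm A :=
  ((Set.finite_singleton b).insert a).subset fun _ hx => by
    by_contra h
    simp only [Set.mem_insert_iff, Set.mem_singleton_iff, not_or] at h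
    exact hx (Equiv.swap_apply_of_ne_of_ne h.1 h.2)

variable [MulAction (FinPerm A) X]

lemma FinSupp.smul {x : X} (hx : FinSupp A x) (π : FinPerm A) : FinSupp A (π • x) := by
  classical
  obtain ⟨S, hS⟩ := hx
  refine ⟨S.image (π • ·), ?_⟩
  rw [Finset.coe_image]
  exact hS.smul_of_group π

variable [Infinite A]

lemma MulAction.Supports.erase [DecidableEq A] {x : X} {S T : Finset A}
    (hS : Supports (FinPerm A) (S : Set A) x) (hT : Supports (FinPerm A) (T : Set A) x)
    {a : A} (ha : a ∉ S) : Supports (FinPerm A) (T.erase a : Set A) x := by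
  intro π hπ
  obtain ⟨d, hd⟩ := (π.2.union (S ∪ T : Finset A).finite_toSet).infinite_compl.nonempty
  simp only [Set.mem_compl_iff, Set.mem_union, Set.mem_ofPred_eq, Finset.coe_union,
    Finset.mem_coe, not_or, not_not] at hd
  obtain ⟨hπd, hdS, hdT⟩ := hd
  let τ : FinPerm A := ⟨Equiv.swap a d, swap_mem_finPerm a d⟩
  have hτ : ∀ {b}, b ≠ a → b ≠ d → τ • b = b := Equiv.swap_apply_of_ne_of_ne
  have hτx : τ • x = x := hS τ fun b hb => hτ (ne_of_mem_of_not_mem hb ha)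
    (ne_of_mem_of_not_mem hb hdS)
  have hτa : τ • a = d := Equiv.swap_apply_left a d
  have hτd : τ • d = a := Equiv.swap_apply_right a d
  have hconj : (τ * π * τ) • x = x := hT _ fun b hb => by
    rw [mul_smul, mul_smul]
    by_cases hba : b = a
    · rw [hba, hτa, show π • d = d from hπd, hτd]
    · have hbd : b ≠ d := ne_of_mem_of_not_mem hb hdT
      rw [hτ hba hbd, hπ (Finset.mem_erase.mpr ⟨hba, hb⟩), hτ hba hbd]
  rw [mul_smul, mul_smul, hτx, smul_eq_iff_eq_inv_smul] at hconj
  rw [hconj, inv_smul_eq_iff, hτx]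

lemma MulAction.Supports.sdiff [DecidableEq A] {x : X} {S T : Finset A}
    (hS : Supports (FinPerm A) (S : Set A) x) (hT : Supports (FinPerm A) (T : Set A) x)
    {R : Finset A} (hR : Disjoint R S) : Supports (FinPerm A) ((T \ R : Finset A) : Set A) x := by
  induction R using Finset.induction_on with
  | empty => simpa using hT
  | insert a R haR ih =>
    rw [Finset.disjoint_insert_left] at hR
    rw [Finset.sdiff_insert]
    exact hS.erase (ih hR.2) hR.1

lemma MulAction.Supports.inter [DecidableEq A] {x : X} {S T : Finset A}
    (hS : Supports (FinPerm A) (S : Set A) x) (hT : Supports (FinPerm A) (T : Set A) x) :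
    Supports (FinPerm A) ((S ∩ T : Finset A) : Set A) x := by
  rw [Finset.inter_comm, ← Finset.sdiff_sdiff_self_left]
  exact hS.sdiff hT Finset.sdiff_disjoint

lemma exists_least_finset_supports {x : X} (hx : FinSupp A x) :
    ∃ S₀ : Finset A, Supports (FinPerm A) (S₀ : Set A) x ∧
      ∀ T : Finset A, Supports (FinPerm A) (T : Set A) x → S₀ ⊆ T := by
  classical
  obtain ⟨S₀, hS₀, hmin⟩ :=
    wellFounded_lt.has_min {S : Finset A | Supports (FinPerm A) (S : Set A) x} hx
  refine ⟨S₀, hS₀, fun T hT => ?_⟩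
  by_contra hsub
  exact hmin _ (hS₀.inter hT) (inf_lt_left.mpr hsub)

lemma supp_supports {x : X} (hx : FinSupp A x) : Supports (FinPerm A) (supp A x) x := by
  obtain ⟨S₀, hS₀, hmin⟩ := exists_least_finset_supports hx
  refine hS₀.mono (Set.subset_sInter ?_)
  rintro T ⟨hTfin, hT⟩
  lift T to Finset A using hTfin
  exact Finset.coe_subset.mpr (hmin T hT)

end Atoms

section CharacteristicFunction

variable {U : Type*}

@[simp]
lemma chi_eq_true {Y : Set U} {x : U} : chi Y x = true ↔ x ∈ Y := by
  simp [chi]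

lemma chi_injective : Function.Injective (chi : Set U → U → Bool) :=
  fun Y Y' h => Set.ext fun x => by rw [← chi_eq_true, h, chi_eq_true]

lemma chi_setOf_eq_true (f : U → Bool) : chi {x | f x = true} = f :=
  funext fun x => Bool.eq_iff_iff.mpr (by simp)

lemma chi_smul_set {G : Type*} [Group G] [MulAction G U] (g : G) (Y : Set U) (x : U) :
    chi (g • Y) x = chi Y (g⁻¹ • x) :=
  Bool.eq_iff_iff.mpr (by simp [Set.mem_smul_set_iff_inv_smul_mem])

end CharacteristicFunction

section FinitelySupportedSubsets

variable {A U : Type*} [MulAction (FinPerm A) U] {X Y : Set U}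

lemma chi_mem_fsBoolFun (hX : FinSupp A X) (hY : Y ∈ Pfs A X) : chi Y ∈ FsBoolFun A X := by
  classical
  obtain ⟨hYX, SY, hSY⟩ := hY
  obtain ⟨SX, hSX⟩ := hX
  have hSY' : Supports (FinPerm A) ((SY ∪ SX : Finset A) : Set A) Y := hSY.mono (by simp)
  have hSX' : Supports (FinPerm A) ((SY ∪ SX : Finset A) : Set A) X := hSX.mono (by simp)
  refine ⟨fun x hx => Bool.eq_false_iff.mpr (by simpa using mt (@hYX x) hx), SY ∪ SX,
    fun π hπ x hx => ⟨(hSX'.smul_mem_iff hπ).mpr hx, ?_⟩⟩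
  exact Bool.eq_iff_iff.mpr (by simp [hSY'.smul_mem_iff hπ])

lemma exists_mem_pfs_chi_eq {f : U → Bool} (hf : f ∈ FsBoolFun A X) :
    ∃ Y ∈ Pfs A X, chi Y = f := by
  obtain ⟨hf₀, S, hS⟩ := hf
  have hYX : {x | f x = true} ⊆ X := fun x hx => by
    by_contra h
    simp [hf₀ x h] at hx
  refine ⟨{x | f x = true}, ⟨hYX, S, supports_of_smul_subset ?_⟩, chi_setOf_eq_true f⟩
  rintro π hπ _ ⟨x, hx, rfl⟩
  change f (π • x) = true
  rw [(hS π hπ x (hYX hx)).2]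
  exact hx

lemma smul_mem_pfs {π : FinPerm A} (hπX : π • X = X) (hY : Y ∈ Pfs A X) :
    π • Y ∈ Pfs A X :=
  ⟨hπX ▸ Set.smul_set_mono hY.1, hY.2.smul π⟩

end FinitelySupportedSubsets

theorem fsm_powerset_equiv_boolFunctions_general {A U : Type*} [Infinite A]
    [MulAction (FinPerm A) U]
    (X : Set U) (hX : FinSupp A X) :
    (∀ Y ∈ Pfs A X, chi Y ∈ FsBoolFun A X) ∧
    Set.InjOn (fun Y : Set U => chi Y) (Pfs A X) ∧
    (∀ f ∈ FsBoolFun A X, ∃ Y ∈ Pfs A X, chi Y = f) ∧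
    (∀ π : FinPerm A, (∀ a ∈ supp A X, π • a = a) →
      ∀ Y ∈ Pfs A X, π • Y ∈ Pfs A X ∧ ∀ x : U, chi (π • Y) x = chi Y (π⁻¹ • x)) :=
  ⟨fun _ hY => chi_mem_fsBoolFun hX hY, chi_injective.injOn, fun _ hf => exists_mem_pfs_chi_eq hf,
    fun π hπ Y hY => ⟨smul_mem_pfs (supp_supports hX π hπ) hY, chi_smul_set π Y⟩⟩

/-- for a finitely supported subset `X` of an invariant set, the map
`Y ↦ χ_Y` is a bijection from `℘_fs(X)` onto the set of finitely supported functions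
from `X` to `{0,1}`, and it is supported by `supp(X)` (where functions carry the action
`(π • f) x = f (π⁻¹ • x)`, since the action on `{0,1}` is trivial). -/
theorem fsm_powerset_equiv_boolFunctions {A U : Type*} [Infinite A]
    [MulAction (FinPerm A) U] (hU : ∀ u : U, FinSupp A u)
    (X : Set U) (hX : FinSupp A X) :
    (∀ Y ∈ Pfs A X, chi Y ∈ FsBoolFun A X) ∧
    Set.InjOn (fun Y : Set U => chi Y) (Pfs A X) ∧
    (∀ f ∈ FsBoolFun A X, ∃ Y ∈ Pfs A X, chi Y = f) ∧
    (∀ π : FinPerm A, (∀ a ∈ supp A X, π • a = a) →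
      ∀ Y ∈ Pfs A X, π • Y ∈ Pfs A X ∧ ∀ x : U, chi (π • Y) x = chi Y (π⁻¹ • x)) :=
  fsm_powerset_equiv_boolFunctions_general X hX
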